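/- arXiv:1605.00375 — 6 statements merged into one kernel-verified Lean document; each statement's English description precedes it below -/
import Mathlib

section
/- The unit group of O_k = ℤ[√ε]/p^kℤ[√ε] is isomorphic, as a group, to ℤ/p^{k−1}ℤ × ℤ/p^{k−1}ℤ × ℤ/(p² − 1)ℤ. -/
/-!
Write `O = ℤ[√ε]/p^k`. As `ε` is not a square mod `p`, the prime `p` stays prime in `ℤ[√ε]`,
so `O` is a local ring whose maximal ideal `pO` is nilpotent and whose residue field
`ℤ[√ε]/p` has `p²` elements; hence `|Oˣ| = p^(k-1) · p^(k-1) · (p² - 1)`.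

For odd `p`, `(1 + p x)^(p^m) ≡ 1 + p^(m+1) x mod p^(m+2)`, so a principal unit `1 + p x` with
`x` a unit has order exactly `p^(k-1)`; this applies to `1 + p` and `1 + p√ε`. A suitable
`p`-power of a lift of a generator of the residue field's unit group has order `p² - 1`.
Reduction mod `p` kills both principal units but is injective on the powers of that lift, and
`u ↦ u / conj u` kills `1 + p` but maps `1 + p√ε` to a principal unit of the same order. So
the three cyclic subgroups form a direct product, and it exhausts `Oˣ` by counting.
-/

open Function Subgroup

section GroupTheory

theorem MonoidHom.coprod_injective_of_map {M N P Q : Type*} [Group M] [Group N] [CommGroup P]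
    [Monoid Q] {f : M →* P} {g : N →* P} (ψ : P →* Q) (hf : Injective f)
    (hψf : ∀ a, ψ (f a) = 1) (hψg : Injective (ψ.comp g)) : Injective (f.coprod g) := by
  refine (injective_iff_map_eq_one _).2 fun ⟨a, b⟩ hab ↦ ?_
  have hb : b = 1 := hψg <| by simpa [hψf] using congrArg ψ hab
  subst hb
  have ha : a = 1 := hf <| by simpa using hab
  rw [ha, Prod.mk_one_one]

theorem injective_comp_zpowers_subtype {G H : Type*} [Group G] [Group H] (ψ : G →* H) {x : G}
    (hx : orderOf (ψ x) = orderOf x) : Injective (ψ.comp (zpowers x).subtype) := by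
  refine (injective_iff_map_eq_one _).2 fun ⟨y, n, hn⟩ hy ↦ Subtype.ext ?_
  simp only [MonoidHom.coe_comp, coe_subtype, comp_apply, ← hn, map_zpow,
    OneMemClass.coe_one] at hy ⊢
  rwa [← orderOf_dvd_iff_zpow_eq_one, hx, orderOf_dvd_iff_zpow_eq_one] at hy

theorem orderOf_pow_eq_orderOf_map_pow {G H : Type*} [Group G] [Finite G] [Monoid H] (ψ : G →* H)
    {m n : ℕ} (hcard : Nat.card G = m * n) (hmn : m.Coprime n) {x : G}
    (hx : orderOf (ψ x) = n) : orderOf (x ^ m) = n ∧ orderOf (ψ (x ^ m)) = n := by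
  have hψ : orderOf (ψ (x ^ m)) = n := by
    rw [map_pow, Nat.Coprime.orderOf_pow (hx ▸ hmn.symm), hx]
  refine ⟨Nat.dvd_antisymm ?_ (hψ ▸ orderOf_map_dvd ψ _), hψ⟩
  exact orderOf_dvd_of_pow_eq_one (by rw [← pow_mul, ← hcard, pow_card_eq_one'])

theorem nonempty_mulEquiv_prod_zmod_orderOf {G G₁ G₂ : Type*} [CommGroup G] [Finite G]
    [Group G₁] [Group G₂] (ψ₁ : G →* G₁) (ψ₂ : G →* G₂) {x y z : G}
    (hx₁ : ψ₁ x = 1) (hy₁ : orderOf (ψ₁ y) = orderOf y)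
    (hx₂ : ψ₂ x = 1) (hy₂ : ψ₂ y = 1) (hz₂ : orderOf (ψ₂ z) = orderOf z)
    (hcard : Nat.card G = orderOf x * orderOf y * orderOf z) :
    Nonempty (G ≃* Multiplicative (ZMod (orderOf x)) × Multiplicative (ZMod (orderOf y)) ×
      Multiplicative (ZMod (orderOf z))) := by
  let Φ := ((zpowers x).subtype.coprod (zpowers y).subtype).coprod (zpowers z).subtype
  have hΦ : Injective Φ := by
    refine MonoidHom.coprod_injective_of_map ψ₂ ?_ ?_ (injective_comp_zpowers_subtype ψ₂ hz₂)
    · exact MonoidHom.coprod_injective_of_map ψ₁ (zpowers x).subtype_injective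
        (fun a ↦ (zpowers_le (H := ψ₁.ker)).2 hx₁ a.2)
        (injective_comp_zpowers_subtype ψ₁ hy₁)
    · rintro ⟨a, b⟩
      have ha : ψ₂ a = 1 := (zpowers_le (H := ψ₂.ker)).2 hx₂ a.2
      have hb : ψ₂ b = 1 := (zpowers_le (H := ψ₂.ker)).2 hy₂ b.2
      simp [ha, hb]
  have hbij : Bijective Φ := (Nat.bijective_iff_injective_and_card Φ).2
    ⟨hΦ, by simp [Nat.card_prod, Nat.card_zpowers, hcard]⟩
  let e (w : G) : zpowers w ≃* Multiplicative (ZMod (orderOf w)) :=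
    mulEquivOfCyclicCardEq <| by
      rw [Nat.card_zpowers, Nat.card_congr Multiplicative.toAdd, Nat.card_zmod]
  exact ⟨(MulEquiv.ofBijective Φ hbij).symm.trans <|
    ((MulEquiv.prodCongr (MulEquiv.prodCongr (e x) (e y)) (e z))).trans MulEquiv.prodAssoc⟩

end GroupTheory

section NilpotentKernel

variable {R S : Type*}

theorem isLocalHom_of_surjective_of_isNilpotent [CommRing R] [Ring S] (π : R →+* S)
    (hπ : Surjective π) (hnil : ∀ x, π x = 0 → IsNilpotent x) : IsLocalHom π := by
  refine ⟨fun x hx ↦ ?_⟩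
  obtain ⟨y, hy⟩ := hπ ↑hx.unit⁻¹
  have hxy : IsNilpotent (x * y - 1) := hnil _ (by simp [hy])
  exact isUnit_of_mul_isUnit_left (y := y) (by simpa using hxy.isUnit_add_one)

variable [Ring R] [Ring S] (π : R →+* S) [IsLocalHom π] (hπ : Surjective π)
include hπ

theorem card_units_mul_card_eq_of_isLocalHom :
    Nat.card Rˣ * Nat.card S = Nat.card R * Nat.card Sˣ := by
  let π' := Units.map (π : R →* S)
  have hπ' : Surjective π' := IsLocalRing.surjective_units_map_of_local_ringHom π hπ ‹_›
  have hker : π'.ker ≃ π.toAddMonoidHom.ker :=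
    { toFun u := ⟨(u : Rˣ) - 1, by
        simpa [sub_eq_zero, π', Units.ext_iff] using MonoidHom.mem_ker.1 u.2⟩
      invFun z := ⟨(isUnit_of_map_unit π (1 + (z : R))
          (by simp [show π z = 0 from z.2])).unit,
        by simpa [π', Units.ext_iff] using (z.2 : π z = 0)⟩
      left_inv u := by ext; simp
      right_inv z := by ext; simp }
  have hR := π.toAddMonoidHom.ker.card_mul_index
  have hU := π'.ker.card_mul_index
  rw [AddSubgroup.index_ker, AddMonoidHom.range_eq_top.2 hπ, AddSubgroup.card_top] at hR
  rw [Subgroup.index_ker, MonoidHom.range_eq_top.2 hπ', Subgroup.card_top,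
    Nat.card_congr hker] at hU
  rw [← hR, ← hU]
  ring

end NilpotentKernel

section PrincipalUnits

variable {R S : Type*} [CommRing R] {p : ℕ}

theorem orderOf_one_add_natCast_mul (hp : p.Prime) (hodd : Odd p) {n : ℕ}
    (hn : (p : R) ^ (n + 1) = 0) {x : R} (hx : (p : R) ^ n * x ≠ 0) :
    orderOf (1 + p * x) = p ^ n := by
  have : Fact p.Prime := ⟨hp⟩
  have hp3 : 3 ≤ p := by
    obtain ⟨m, rfl⟩ := hodd
    have := hp.two_le
    omega
  -- `p ^ 3 ∣ p ^ p` is where `p` odd is needed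
  have hpow (m : ℕ) : ∃ y, (1 + p * x) ^ p ^ m = 1 + p ^ (m + 1) * x + p ^ (m + 2) * y := by
    obtain ⟨y, hy⟩ := ZMod.exists_one_add_mul_pow_prime_pow_eq hp (dvd_refl (p : R))
      (by simpa [pow_succ] using pow_dvd_pow (p : R) hp3) x m
    exact ⟨y, by rw [hy]; ring⟩
  cases n with
  | zero =>
    rw [zero_add, pow_one] at hn
    simp [hn]
  | succ m =>
    apply orderOf_eq_prime_pow
    · obtain ⟨y, hy⟩ := hpow m
      rwa [hy, hn, zero_mul, add_zero, add_eq_left]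
    · obtain ⟨y, hy⟩ := hpow (m + 1)
      rw [hy, hn, pow_succ _ (m + 1 + 1), hn]
      ring

theorem isUnit_two_of_isNilpotent (hodd : Odd p) (h : IsNilpotent (p : R)) : IsUnit (2 : R) := by
  obtain ⟨m, rfl⟩ := hodd
  -- `2 * ((p + 1) / 2) = 1 + p`
  refine isUnit_of_mul_isUnit_left (y := ((m + 1 : ℕ) : R)) ?_
  convert h.isUnit_add_one using 1
  push_cast
  ring

noncomputable def principalUnit (h : IsNilpotent (p : R)) (x : R) : Rˣ :=
  ((Commute.all _ x).isNilpotent_mul_right h).isUnit_one_add.unit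

variable (h : IsNilpotent (p : R))

@[simp]
theorem coe_principalUnit (x : R) : (principalUnit h x : R) = 1 + p * x :=
  IsUnit.unit_spec _

theorem orderOf_principalUnit (hp : p.Prime) (hodd : Odd p) {n : ℕ} (hn : (p : R) ^ (n + 1) = 0)
    (hpn : (p : R) ^ n ≠ 0) {x : R} (hx : IsUnit x) : orderOf (principalUnit h x) = p ^ n := by
  rw [← orderOf_units, coe_principalUnit]
  exact orderOf_one_add_natCast_mul hp hodd hn (by rwa [Ne, hx.mul_left_eq_zero])

theorem map_principalUnit [CommRing S] (f : R →+* S) (h' : IsNilpotent (p : S)) (x : R) :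
    Units.map (f : R →* S) (principalUnit h x) = principalUnit h' (f x) := by
  ext
  simp

theorem map_principalUnit_eq_one [Ring S] (f : R →+* S) (hf : (p : S) = 0) (x : R) :
    Units.map (f : R →* S) (principalUnit h x) = 1 := by
  ext
  simp [hf]

theorem principalUnit_div_principalUnit_neg (x : R) :
    principalUnit h x / principalUnit h (-x) =
      principalUnit h (2 * x * ↑(principalUnit h (-x))⁻¹) := by
  ext
  have hinv := (principalUnit h (-x)).inv_mul
  simp only [coe_principalUnit] at hinv
  simp only [div_eq_mul_inv, Units.val_mul, coe_principalUnit]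
  linear_combination hinv

end PrincipalUnits

namespace Zsqrtd

variable {d : ℤ}

theorem mem_span_natCast_iff {n : ℕ} {x : ℤ√d} :
    x ∈ Ideal.span {(n : ℤ√d)} ↔ (x.re : ZMod n) = 0 ∧ (x.im : ZMod n) = 0 := by
  rw [Ideal.mem_span_singleton, ← Int.cast_natCast, intCast_dvd,
    ZMod.intCast_zmod_eq_zero_iff_dvd, ZMod.intCast_zmod_eq_zero_iff_dvd]

theorem card_quotient_span_natCast (n : ℕ) : Nat.card (ℤ√d ⧸ Ideal.span {(n : ℤ√d)}) = n ^ 2 := by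
  let g : ℤ√d →+ ZMod n × ZMod n :=
    { toFun x := (x.re, x.im)
      map_zero' := by simp
      map_add' x y := by simp }
  have hg : Surjective g := fun ⟨u, v⟩ ↦
    ⟨⟨(u.cast : ℤ), (v.cast : ℤ)⟩, by simp [g]⟩
  have hker : g.ker = (Ideal.span {(n : ℤ√d)}).toAddSubgroup := by
    ext x
    simp [g, mem_span_natCast_iff, Prod.ext_iff]
  calc Nat.card (ℤ√d ⧸ Ideal.span {(n : ℤ√d)}) = g.ker.index := by rw [hker]; rfl
    _ = n ^ 2 := by
      rw [AddSubgroup.index_ker, AddMonoidHom.range_eq_top.2 hg, AddSubgroup.card_top,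
        Nat.card_prod, Nat.card_zmod, sq]

variable {p : ℕ}

theorem natCast_dvd_iff_dvd_norm (hp : p.Prime) (hd : ¬IsSquare (d : ZMod p)) {x : ℤ√d} :
    (p : ℤ√d) ∣ x ↔ (p : ℤ) ∣ x.norm := by
  have : Fact p.Prime := ⟨hp⟩
  refine ⟨fun ⟨y, hy⟩ ↦ ⟨p * y.norm, by rw [hy, norm_mul, norm_natCast]; ring⟩, fun h ↦ ?_⟩
  rw [← Ideal.mem_span_singleton, mem_span_natCast_iff]
  rw [← ZMod.intCast_zmod_eq_zero_iff_dvd, norm_def] at h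
  push_cast at h
  by_cases him : (x.im : ZMod p) = 0
  · simp_all
  · exact absurd ⟨x.re / x.im, by field_simp; linear_combination -h⟩ hd

theorem prime_natCast (hp : p.Prime) (hd : ¬IsSquare (d : ZMod p)) : Prime (p : ℤ√d) := by
  refine ⟨by exact_mod_cast hp.ne_zero, fun hu ↦ ?_, fun x y hxy ↦ ?_⟩
  · have h1 := (natCast_dvd_iff_dvd_norm hp hd).1 (isUnit_iff_dvd_one.1 hu)
    rw [norm_one] at h1
    exact hp.not_dvd_one (by exact_mod_cast h1)
  · simp only [natCast_dvd_iff_dvd_norm hp hd, norm_mul] at hxy ⊢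
    exact (Nat.prime_iff_prime_int.1 hp).dvd_or_dvd hxy

theorem finite_quotient_span_natCast {n : ℕ} (hn : n ≠ 0) :
    Finite (ℤ√d ⧸ Ideal.span {(n : ℤ√d)}) :=
  Nat.finite_of_card_ne_zero (by simp [card_quotient_span_natCast, hn])

theorem isMaximal_span_natCast (hp : p.Prime) (hd : ¬IsSquare (d : ZMod p)) :
    (Ideal.span {(p : ℤ√d)}).IsMaximal := by
  have := (Ideal.span_singleton_prime (by exact_mod_cast hp.ne_zero)).2 (prime_natCast hp hd)
  have := finite_quotient_span_natCast (d := d) hp.ne_zero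
  exact Ideal.Quotient.maximal_of_isField _ (Finite.isDomain_to_isField _)

end Zsqrtd

section QuotientPrimePow

variable {p k : ℕ} {ε : ℤ}

local notation "O" => ℤ√ε ⧸ Ideal.span {(p : ℤ√ε) ^ k}
local notation "𝔽" => ℤ√ε ⧸ Ideal.span {(p : ℤ√ε)}

theorem natCast_pow_eq_zero_quotient : (p : O) ^ k = 0 := by
  rw [← map_natCast (Ideal.Quotient.mk _), ← map_pow, Ideal.Quotient.eq_zero_iff_mem]
  exact Ideal.mem_span_singleton_self _

theorem natCast_pow_pred_ne_zero_quotient (hp : p.Prime) (hk : k ≠ 0) : (p : O) ^ (k - 1) ≠ 0 := by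
  rw [← map_natCast (Ideal.Quotient.mk _), ← map_pow, Ne, Ideal.Quotient.eq_zero_iff_mem,
    Ideal.mem_span_singleton, ← Nat.cast_pow, ← Nat.cast_pow, ← Int.cast_natCast,
    ← Int.cast_natCast (R := ℤ√ε) (p ^ (k - 1)), Zsqrtd.intCast_dvd_intCast,
    Int.natCast_dvd_natCast, Nat.pow_dvd_pow_iff_le_right hp.one_lt]
  omega

theorem isNilpotent_natCast_quotient : IsNilpotent (p : O) :=
  ⟨k, natCast_pow_eq_zero_quotient⟩

theorem orderOf_principalUnit_quotient (hp : p.Prime) (hodd : Odd p) (hk : k ≠ 0) {x : O}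
    (hx : IsUnit x) : orderOf (principalUnit isNilpotent_natCast_quotient x) = p ^ (k - 1) :=
  orderOf_principalUnit _ hp hodd
    (by rw [Nat.sub_add_cancel (Nat.one_le_iff_ne_zero.2 hk)]; exact natCast_pow_eq_zero_quotient)
    (natCast_pow_pred_ne_zero_quotient hp hk) hx

theorem finite_quotient (hp : p.Prime) : Finite O := by
  simpa only [Nat.cast_pow] using
    Zsqrtd.finite_quotient_span_natCast (d := ε) (pow_ne_zero k hp.ne_zero)

variable (p ε) in
def residue (hk : k ≠ 0) : O →+* 𝔽 :=
  Ideal.Quotient.factor (Ideal.span_singleton_le_span_singleton.2 (dvd_pow_self _ hk))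

theorem residue_surjective (hk : k ≠ 0) : Surjective (residue p ε hk) :=
  Ideal.Quotient.factor_surjective _

theorem isLocalHom_residue (hk : k ≠ 0) : IsLocalHom (residue p ε hk) := by
  refine isLocalHom_of_surjective_of_isNilpotent _ (residue_surjective hk) fun x hx ↦ ?_
  obtain ⟨x, rfl⟩ := Ideal.Quotient.mk_surjective x
  rw [residue, Ideal.Quotient.factor_mk, Ideal.Quotient.eq_zero_iff_mem,
    Ideal.mem_span_singleton] at hx
  obtain ⟨y, rfl⟩ := hx
  refine ⟨k, ?_⟩
  rw [← map_pow, mul_pow, Ideal.Quotient.eq_zero_iff_mem]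
  exact Ideal.mul_mem_right _ _ (Ideal.mem_span_singleton_self _)

theorem card_units_quotient (hp : p.Prime) (hε : ¬IsSquare (ε : ZMod p)) (hk : k ≠ 0) :
    Nat.card Oˣ = p ^ (k - 1) * p ^ (k - 1) * (p ^ 2 - 1) := by
  have := Zsqrtd.isMaximal_span_natCast hp hε
  let := Ideal.Quotient.field (Ideal.span {(p : ℤ√ε)})
  have := isLocalHom_residue (p := p) (ε := ε) hk
  have h := card_units_mul_card_eq_of_isLocalHom (residue p ε hk)
    (residue_surjective hk)
  have hO : Nat.card O = (p ^ k) ^ 2 := by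
    rw [← Zsqrtd.card_quotient_span_natCast, Nat.cast_pow]
  rw [Nat.card_units, Zsqrtd.card_quotient_span_natCast, hO] at h
  apply Nat.eq_of_mul_eq_mul_right (pow_pos hp.pos 2)
  rw [h]
  obtain ⟨j, rfl⟩ : ∃ j, k = j + 1 := ⟨k - 1, by omega⟩
  simp only [add_tsub_cancel_right]
  ring

theorem exists_orderOf_map_residue_eq (hp : p.Prime) (hε : ¬IsSquare (ε : ZMod p)) (hk : k ≠ 0) :
    ∃ ζ : Oˣ, orderOf ζ = p ^ 2 - 1 ∧
      orderOf (Units.map (residue p ε hk : O →* 𝔽) ζ) = orderOf ζ := by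
  have := Zsqrtd.isMaximal_span_natCast hp hε
  let := Ideal.Quotient.field (Ideal.span {(p : ℤ√ε)})
  have hloc := isLocalHom_residue (p := p) (ε := ε) hk
  have := Zsqrtd.finite_quotient_span_natCast (d := ε) hp.ne_zero
  have := finite_quotient (k := k) (ε := ε) hp
  obtain ⟨ζ₀, hζ₀⟩ := IsCyclic.exists_ofOrder_eq_natCard (α := 𝔽ˣ)
  obtain ⟨u, rfl⟩ := IsLocalRing.surjective_units_map_of_local_ringHom _ (residue_surjective hk)
    hloc ζ₀
  have hcop : (p ^ (k - 1) * p ^ (k - 1)).Coprime (p ^ 2 - 1) := by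
    have : (p ^ 2).Coprime (p ^ 2 - 1) :=
      (Nat.coprime_self_sub_right (Nat.one_le_two_pow.trans (Nat.pow_le_pow_left hp.two_le 2))).2
        (Nat.coprime_one_right _)
    have hpc := this.coprime_dvd_left (dvd_pow_self p two_ne_zero)
    exact Nat.Coprime.mul_left (hpc.pow_left _) (hpc.pow_left _)
  obtain ⟨h₁, h₂⟩ := orderOf_pow_eq_orderOf_map_pow _ (card_units_quotient hp hε hk) hcop
    (by rw [hζ₀, Nat.card_units, Zsqrtd.card_quotient_span_natCast])
  exact ⟨_, h₁, h₂.trans h₁.symm⟩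

theorem isUnit_mk_sqrtd (hp : p.Prime) (hε : ¬IsSquare (ε : ZMod p)) (hk : k ≠ 0) :
    IsUnit (Ideal.Quotient.mk (Ideal.span {(p : ℤ√ε) ^ k}) Zsqrtd.sqrtd) := by
  have := Zsqrtd.isMaximal_span_natCast hp hε
  let := Ideal.Quotient.field (Ideal.span {(p : ℤ√ε)})
  have := isLocalHom_residue (p := p) (ε := ε) hk
  refine isUnit_of_map_unit (residue p ε hk) _ (isUnit_iff_ne_zero.2 ?_)
  have : Fact p.Prime := ⟨hp⟩
  rw [residue, Ideal.Quotient.factor_mk, Ne, Ideal.Quotient.eq_zero_iff_mem,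
    Zsqrtd.mem_span_natCast_iff]
  simp

variable (p k ε) in
def conj : O →+* O :=
  Ideal.quotientMap _ (starRingEnd (ℤ√ε)) <| Ideal.span_le.2 <| by simp

theorem map_residue_principalUnit (hk : k ≠ 0) (x : O) :
    Units.map (residue p ε hk : O →* 𝔽) (principalUnit isNilpotent_natCast_quotient x) = 1 :=
  map_principalUnit_eq_one _ _ (by simpa using Ideal.Quotient.mk_singleton_self (p : ℤ√ε)) x

theorem conj_mk_sqrtd :
    conj p k ε (Ideal.Quotient.mk _ Zsqrtd.sqrtd) = -Ideal.Quotient.mk _ Zsqrtd.sqrtd := by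
  rw [conj, Ideal.quotientMap_mk, ← map_neg]
  congr 1

end QuotientPrimePow

/-- The unit group of `O_k = ℤ[√ε]/p^kℤ[√ε]` is isomorphic, as a group, to
`ℤ/p^(k-1)ℤ × ℤ/p^(k-1)ℤ × ℤ/(p²-1)ℤ`. -/
theorem units_quotient_zsqrtd_iso (p k : ℕ) (hp : p.Prime) (hodd : Odd p) (hk : 1 ≤ k)
    (ε : ℤ) (hε : ¬ IsSquare (ε : ZMod p)) :
    Nonempty ((Zsqrtd ε ⧸ Ideal.span {(p : Zsqrtd ε) ^ k})ˣ ≃*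
      Multiplicative (ZMod (p ^ (k - 1))) × Multiplicative (ZMod (p ^ (k - 1))) ×
        Multiplicative (ZMod (p ^ 2 - 1))) := by
  have hk0 : k ≠ 0 := by omega
  have := finite_quotient (k := k) (ε := ε) hp
  have hnil := isNilpotent_natCast_quotient (p := p) (k := k) (ε := ε)
  have hord {x : ℤ√ε ⧸ Ideal.span {(p : ℤ√ε) ^ k}} (hx : IsUnit x) :=
    orderOf_principalUnit_quotient hp hodd hk0 hx
  have hs := isUnit_mk_sqrtd hp hε hk0
  obtain ⟨ζ, hζ, hπζ⟩ := exists_orderOf_map_residue_eq hp hε hk0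
  let ψ₁ : (ℤ√ε ⧸ Ideal.span {(p : ℤ√ε) ^ k})ˣ →* (ℤ√ε ⧸ Ideal.span {(p : ℤ√ε) ^ k})ˣ :=
    MonoidHom.id _ / Units.map (conj p k ε)
  let ψ₂ := Units.map
    (residue p ε hk0 : ℤ√ε ⧸ Ideal.span {(p : ℤ√ε) ^ k} →* ℤ√ε ⧸ Ideal.span {(p : ℤ√ε)})
  have key := nonempty_mulEquiv_prod_zmod_orderOf ψ₁ ψ₂
    (x := principalUnit hnil 1) (y := principalUnit hnil (Ideal.Quotient.mk _ Zsqrtd.sqrtd))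
    (z := ζ) ?_ ?_ (map_residue_principalUnit hk0 _) (map_residue_principalUnit hk0 _) hπζ ?_
  · rwa [hord isUnit_one, hord hs, hζ] at key
  · simp [ψ₁, map_principalUnit hnil _ hnil]
  · rw [MonoidHom.div_apply, MonoidHom.id_apply, map_principalUnit hnil _ hnil, conj_mk_sqrtd,
      principalUnit_div_principalUnit_neg, hord hs, hord]
    exact ((isUnit_two_of_isNilpotent hodd hnil).mul hs).mul (Units.isUnit _)
  · rw [card_units_quotient hp hε hk0, hord isUnit_one, hord hs, hζ]
end

section
/- The subgroup B of the unit group of O_k = ℤ[√ε]/p^kℤ[√ε] consisting of the units whose image in ℤ[√ε]/pℤ[√ε] equals 1 (i.e. units congruent to 1 modulo p) is isomorphic to ℤ/p^{k−1}ℤ × ℤ/p^{k−1}ℤ; in particular it has order p^{2k−2} and contains exactly p^{2k−2} − p^{2k−4} elements of order p^{k−1} when k ≥ 2. -/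
/-
For odd `p` the binomial theorem gives `(1 + p x) ^ p ^ j ≡ 1 + p ^ (j + 1) x [mod p ^ (j + 2)]`.
Hence `u = 1 + p` and `v = 1 + p√ε` satisfy `u ^ p ^ (k - 1) = v ^ p ^ (k - 1) = 1` in `B`, and
`(a, b) ↦ u ^ a v ^ b` is a homomorphism `(ℤ/p^(k-1))² → B`. It is injective: an element of order
`p` of the source is `(p ^ (k - 2) a, p ^ (k - 2) b)`, and its image is
`≡ 1 + p ^ (k - 1) (a + b√ε) [mod p ^ k]`, which is `1` only if `p ∣ a` and `p ∣ b`. Every element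
of `B` is `1 + p z` with `z` mattering only modulo `p ^ (k - 1)`, so `|B| ≤ p ^ (2k - 2)` and the
homomorphism is an isomorphism. An element of `(ℤ/p^(k-1))²` has order `p ^ (k - 1)` unless it is
killed by `p ^ (k - 2)`, which leaves `p ^ (2k - 2) - p ^ (2k - 4)` elements.
-/

open Function

noncomputable def redModP (ε : ℤ) (p k : ℕ) (hk : 1 ≤ k) :
    (Zsqrtd ε ⧸ Ideal.span {(p : Zsqrtd ε) ^ k}) →+* (Zsqrtd ε ⧸ Ideal.span {(p : Zsqrtd ε)}) :=
  Ideal.Quotient.factor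
    (Ideal.span_singleton_le_span_singleton.mpr (dvd_pow_self _ (by omega)))

noncomputable def unitsOneModP (ε : ℤ) (p k : ℕ) (hk : 1 ≤ k) :
    Subgroup (Zsqrtd ε ⧸ Ideal.span {(p : Zsqrtd ε) ^ k})ˣ :=
  MonoidHom.ker (Units.map (redModP ε p k hk).toMonoidHom)

section BinomialCongruences

variable {A : Type*} [CommRing A] {p : ℕ}

theorem one_add_mul_pow_sub_one_add_sq_mul (hp : Odd p) (x : A) :
    (p : A) ^ 3 * x ∣ (1 + p * x) ^ p - (1 + p ^ 2 * x) := by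
  -- `(1 + p x) ^ p - 1 = p x ∑ i < p, (1 + p x) ^ i`, and that sum is `≡ p [mod p ^ 2]`.
  obtain ⟨t, ht⟩ := odd_sq_dvd_geom_sum₂_sub 1 x hp
  have hgeom := geom_sum₂_mul (1 + p * x) 1 p
  simp only [one_pow, mul_one] at ht hgeom
  exact ⟨t, by linear_combination (-1 : A) * hgeom + p * x * ht⟩

theorem one_add_mul_pow_pow_sub (hp : Odd p) (j : ℕ) (x : A) :
    (p : A) ^ (j + 2) ∣ (1 + p * x) ^ p ^ j - (1 + p ^ (j + 1) * x) := by
  induction j with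
  | zero => simp
  | succ j ih =>
    obtain ⟨s, hs⟩ := ih
    obtain ⟨t, ht⟩ := one_add_mul_pow_sub_one_add_sq_mul hp ((p : A) ^ j * (x + p * s))
    refine ⟨s + (x + p * s) * t, ?_⟩
    rw [pow_succ, pow_mul, sub_eq_iff_eq_add.mp hs]
    linear_combination ht

theorem one_add_mul_pow_mul_pow_sub (a b : ℕ) (x y : A) :
    (p : A) ^ 2 ∣ (1 + p * x) ^ a * (1 + p * y) ^ b - (1 + p * (a * x + b * y)) := by
  obtain ⟨s, hs⟩ := sq_dvd_add_pow_sub_sub ((p : A) * x) 1 a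
  obtain ⟨t, ht⟩ := sq_dvd_add_pow_sub_sub ((p : A) * y) 1 b
  simp only [one_pow, one_mul] at hs ht
  have hx : (1 + (p : A) * x) ^ a = 1 + p * (a * x) + p ^ 2 * (x ^ 2 * s) := by
    rw [add_comm]; linear_combination hs
  have hy : (1 + (p : A) * y) ^ b = 1 + p * (b * y) + p ^ 2 * (y ^ 2 * t) := by
    rw [add_comm]; linear_combination ht
  rw [hx, hy]
  exact ⟨x ^ 2 * s + y ^ 2 * t + a * b * x * y + p * (a * x * y ^ 2 * t + b * y * x ^ 2 * s)
    + p ^ 2 * x ^ 2 * y ^ 2 * s * t, by ring⟩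

theorem one_add_mul_pow_mul_pow_pow_sub (hp : Odd p) (j a b : ℕ) (x y : A) :
    (p : A) ^ (j + 2) ∣
      ((1 + p * x) ^ a * (1 + p * y) ^ b) ^ p ^ j - (1 + p ^ (j + 1) * (a * x + b * y)) := by
  obtain ⟨t, ht⟩ := one_add_mul_pow_mul_pow_sub a b x y
  obtain ⟨s, hs⟩ := one_add_mul_pow_pow_sub hp j (a * x + b * y + p * t)
  refine ⟨s + t, ?_⟩
  rw [show (1 + p * x) ^ a * (1 + p * y) ^ b = 1 + (p : A) * (a * x + b * y + p * t) by
    linear_combination ht]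
  linear_combination hs

end BinomialCongruences

theorem MonoidHom.injective_of_pow_eq_one {G H : Type*} [Group G] [Monoid H] (f : G →* H)
    {p n : ℕ} (hG : ∀ g : G, g ^ p ^ n = 1) (hf : ∀ g : G, g ^ p = 1 → f g = 1 → g = 1) :
    Injective f := by
  rw [injective_iff_map_eq_one]
  suffices ∀ n, ∀ g : G, g ^ p ^ n = 1 → f g = 1 → g = 1 from fun g => this n g (hG g)
  intro n
  induction n with
  | zero => simp
  | succ n ih =>
    intro g hg hfg
    refine hf g (ih (g ^ p) ?_ (by rw [map_pow, hfg, one_pow])) hfg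
    rwa [← pow_mul, ← pow_succ']

section ZModPowers

variable {G : Type*} [Group G] {n : ℕ} {g : G}

noncomputable def zmodPowersHom (hg : g ^ n = 1) : Multiplicative (ZMod n) →* G :=
  AddMonoidHom.toMultiplicativeLeft <| ZMod.lift n
    ⟨zmultiplesHom (Additive G) (Additive.ofMul g), by simpa using congrArg Additive.ofMul hg⟩

theorem zmodPowersHom_ofAdd_intCast (hg : g ^ n = 1) (m : ℤ) :
    zmodPowersHom hg (Multiplicative.ofAdd (m : ZMod n)) = g ^ m :=
  congrArg Additive.toMul (ZMod.lift_coe n _ m)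

theorem zmodPowersHom_ofAdd_natCast (hg : g ^ n = 1) (m : ℕ) :
    zmodPowersHom hg (Multiplicative.ofAdd (m : ZMod n)) = g ^ m := by
  simpa using zmodPowersHom_ofAdd_intCast hg m

end ZModPowers

theorem Multiplicative.zmod_pow_eq_one {n : ℕ} (c : Multiplicative (ZMod n)) : c ^ n = 1 := by
  rw [← toAdd_eq_zero, toAdd_pow, nsmul_eq_mul, ZMod.natCast_self, zero_mul]

theorem MulEquiv.card_setOf_orderOf_eq {G H : Type*} [Monoid G] [Monoid H] (e : G ≃* H) (n : ℕ) :
    Nat.card {g : G | orderOf g = n} = Nat.card {h : H | orderOf h = n} :=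
  Nat.card_congr (e.toEquiv.subtypeEquiv fun g => by simp [e.orderOf_eq])

theorem card_setOf_orderOf_eq_prime_pow_succ {G : Type*} [CommGroup G] [Finite G] {p : ℕ}
    [Fact p.Prime] (m : ℕ) (hG : ∀ g : G, g ^ p ^ (m + 1) = 1) :
    Nat.card {g : G | orderOf g = p ^ (m + 1)} =
      Nat.card G - Nat.card (powMonoidHom (p ^ m) : G →* G).ker := by
  have hp : p.Prime := Fact.out
  have hset : {g : G | orderOf g = p ^ (m + 1)} =
      ((powMonoidHom (p ^ m) : G →* G).ker : Set G)ᶜ := by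
    ext g
    refine ⟨fun h => pow_ne_one_of_lt_orderOf (pow_ne_zero m hp.ne_zero) ?_,
      fun h => orderOf_eq_prime_pow h (hG g)⟩
    rw [h]
    exact Nat.pow_lt_pow_right hp.one_lt m.lt_succ_self
  rw [Nat.card_coe_set_eq, hset, Set.ncard_compl]
  rfl

theorem card_setOf_orderOf_eq_prod_zmod {p : ℕ} [Fact p.Prime] (m : ℕ) :
    Nat.card {y : Multiplicative (ZMod (p ^ (m + 1))) × Multiplicative (ZMod (p ^ (m + 1))) |
      orderOf y = p ^ (m + 1)} = p ^ (2 * m + 2) - p ^ (2 * m) := by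
  set C := Multiplicative (ZMod (p ^ (m + 1)))
  have hC : Nat.card C = p ^ (m + 1) := Nat.card_zmod _
  have hpow : (powMonoidHom (p ^ m) : C × C →* C × C) =
      (powMonoidHom (p ^ m)).prodMap (powMonoidHom (p ^ m)) := rfl
  have hker : Nat.card (powMonoidHom (p ^ m) : C →* C).ker = p ^ m := by
    rw [IsCyclic.card_powMonoidHom_ker, hC, Nat.gcd_eq_right (pow_dvd_pow p m.le_succ)]
  rw [card_setOf_orderOf_eq_prime_pow_succ m fun y => ?_, hpow, MonoidHom.ker_prodMap,
    Nat.card_congr (Subgroup.prodEquiv _ _).toEquiv, Nat.card_prod, Nat.card_prod, hker, hC]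
  · ring_nf
  · exact Prod.ext (Multiplicative.zmod_pow_eq_one _) (Multiplicative.zmod_pow_eq_one _)

theorem ZMod.exists_eq_pow_pred_mul_of_nsmul_eq_zero {p n : ℕ} (hp : 0 < p) {x : ZMod (p ^ n)}
    (hx : p • x = 0) : ∃ a : ℕ, x = ((p ^ (n - 1) * a : ℕ) : ZMod (p ^ n)) := by
  have : NeZero (p ^ n) := ⟨(pow_pos hp n).ne'⟩
  suffices p ^ (n - 1) ∣ x.val by
    obtain ⟨a, ha⟩ := this
    exact ⟨a, by rw [← ha, ZMod.natCast_zmod_val]⟩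
  rw [← ZMod.natCast_zmod_val x, nsmul_eq_mul, ← Nat.cast_mul, ZMod.natCast_eq_zero_iff] at hx
  rcases n with _ | n
  · exact one_dvd _
  · exact Nat.dvd_of_mul_dvd_mul_left hp (by rwa [← pow_succ'])

theorem Zsqrtd.natCast_pow_dvd_iff {d : ℤ} (p n : ℕ) (z : ℤ√d) :
    (p : ℤ√d) ^ n ∣ z ↔ (p : ℤ) ^ n ∣ z.re ∧ (p : ℤ) ^ n ∣ z.im := by
  rw [← Zsqrtd.intCast_dvd]
  push_cast
  rfl

theorem Zsqrtd.natCast_dvd_of_pow_succ_dvd_pow_mul {d : ℤ} {p : ℕ} (hp : 0 < p) {n : ℕ}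
    {z : ℤ√d} (h : (p : ℤ√d) ^ (n + 1) ∣ p ^ n * z) : (p : ℤ) ∣ z.re ∧ (p : ℤ) ∣ z.im := by
  have hpn : (p : ℤ) ^ n ≠ 0 := pow_ne_zero n (by exact_mod_cast hp.ne')
  rw [show (p : ℤ√d) ^ n = ((p ^ n : ℤ) : ℤ√d) by push_cast; rfl, natCast_pow_dvd_iff, re_smul,
    im_smul, pow_succ] at h
  exact ⟨(mul_dvd_mul_iff_left hpn).mp h.1, (mul_dvd_mul_iff_left hpn).mp h.2⟩

theorem Ideal.Quotient.isUnit_mk_one_add_mul {A : Type*} [CommRing A] (π z : A) (k : ℕ) :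
    IsUnit (Ideal.Quotient.mk (Ideal.span {π ^ k}) (1 + π * z)) := by
  rw [map_add, map_one]
  refine IsNilpotent.isUnit_one_add ⟨k, ?_⟩
  rw [← map_pow, Ideal.Quotient.eq_zero_iff_mem, Ideal.mem_span_singleton, mul_pow]
  exact dvd_mul_right _ _

namespace UnitsOneModP

open Ideal.Quotient

variable {ε : ℤ} (p : ℕ) {k : ℕ} (hk : 1 ≤ k)

local notation "𝒪" => ℤ√ε ⧸ Ideal.span {(p : ℤ√ε) ^ k}

theorem mem_iff (u : 𝒪ˣ) :
    u ∈ unitsOneModP ε p k hk ↔ ∃ z : ℤ√ε, (u : 𝒪) = mk _ (1 + p * z) := by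
  obtain ⟨x, hx⟩ := mk_surjective (u : 𝒪)
  rw [unitsOneModP, MonoidHom.mem_ker, Units.ext_iff, Units.coe_map, ← hx]
  simp only [RingHom.toMonoidHom_eq_coe, MonoidHom.coe_coe, redModP, factor_mk, Units.val_one]
  rw [← map_one (mk _), Ideal.Quotient.eq, Ideal.mem_span_singleton]
  constructor
  · rintro ⟨z, hz⟩
    exact ⟨z, by rw [← hz, add_sub_cancel]⟩
  · rintro ⟨z, hz⟩
    rw [Ideal.Quotient.eq, Ideal.mem_span_singleton] at hz
    convert ((dvd_pow_self _ (by omega)).trans hz).add (dvd_mul_right (p : ℤ√ε) z) using 1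
    ring

noncomputable def oneAddMul (z : ℤ√ε) : unitsOneModP ε p k hk :=
  ⟨(isUnit_mk_one_add_mul _ z k).unit, (mem_iff p hk _).mpr ⟨z, IsUnit.unit_spec _⟩⟩

theorem coe_oneAddMul (z : ℤ√ε) : ((oneAddMul p hk z : 𝒪ˣ) : 𝒪) = mk _ (1 + p * z) :=
  IsUnit.unit_spec _

theorem coe_coe_pow (b : unitsOneModP ε p k hk) (n : ℕ) :
    (((b ^ n : unitsOneModP ε p k hk) : 𝒪ˣ) : 𝒪) = ((b : 𝒪ˣ) : 𝒪) ^ n := by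
  rw [SubgroupClass.coe_pow, Units.val_pow_eq_pow_val]

theorem oneAddMul_surjective : Surjective (oneAddMul (ε := ε) p hk) := fun b => by
  obtain ⟨z, hz⟩ := (mem_iff p hk b.1).mp b.2
  exact ⟨z, Subtype.ext (Units.ext ((coe_oneAddMul p hk z).trans hz.symm))⟩

theorem oneAddMul_eq_oneAddMul {z z' : ℤ√ε} (h : (p : ℤ√ε) ^ (k - 1) ∣ z - z') :
    oneAddMul p hk z = oneAddMul p hk z' := by
  refine Subtype.ext (Units.ext ?_)
  rw [coe_oneAddMul, coe_oneAddMul, Ideal.Quotient.eq, Ideal.mem_span_singleton,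
    ← Nat.sub_add_cancel hk, pow_succ']
  convert mul_dvd_mul_left (p : ℤ√ε) h using 1
  ring

theorem oneAddMul_pow_eq_one (z : ℤ√ε) : oneAddMul p hk z ^ p ^ (k - 1) = 1 := by
  refine Subtype.ext (Units.ext ?_)
  rw [coe_coe_pow, coe_oneAddMul, ← map_pow, OneMemClass.coe_one, Units.val_one, ← map_one (mk _),
    Ideal.Quotient.eq, Ideal.mem_span_singleton]
  have := dvd_sub_pow_of_dvd_sub (p := p) (a := 1 + p * z) (b := 1) ⟨z, by ring⟩ (k - 1)
  rwa [one_pow, Nat.sub_add_cancel hk] at this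

theorem dvd_of_oneAddMul_pow_mul_pow_eq_one (hodd : Odd p) (hk2 : 2 ≤ k) {a b : ℕ}
    (h : (oneAddMul p hk (1 : ℤ√ε) ^ a * oneAddMul p hk Zsqrtd.sqrtd ^ b) ^ p ^ (k - 2) = 1) :
    p ∣ a ∧ p ∣ b := by
  obtain ⟨m, rfl⟩ : ∃ m, k = m + 2 := ⟨k - 2, by omega⟩
  have hcoe := Units.ext_iff.mp (Subtype.ext_iff.mp h)
  simp only [coe_coe_pow, Subgroup.coe_mul, Units.val_mul, coe_oneAddMul, ← map_pow, ← map_mul,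
    OneMemClass.coe_one, Units.val_one, ← map_one (mk _), Ideal.Quotient.eq,
    Ideal.mem_span_singleton, Nat.add_sub_cancel] at hcoe
  have hdvd : (p : ℤ√ε) ^ (m + 1 + 1) ∣
      (p : ℤ√ε) ^ (m + 1) * ((a : ℤ√ε) * 1 + (b : ℤ√ε) * Zsqrtd.sqrtd) := by
    have := dvd_sub hcoe (one_add_mul_pow_mul_pow_pow_sub hodd m a b 1 Zsqrtd.sqrtd)
    rwa [sub_sub_sub_cancel_left, add_sub_cancel_left] at this
  obtain ⟨ha, hb⟩ := Zsqrtd.natCast_dvd_of_pow_succ_dvd_pow_mul hodd.pos hdvd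
  simp only [mul_one, Zsqrtd.re_add, Zsqrtd.re_natCast, Zsqrtd.re_mul, Zsqrtd.re_sqrtd, mul_zero,
    Zsqrtd.im_natCast, Zsqrtd.im_sqrtd, add_zero, Zsqrtd.im_add, Zsqrtd.im_mul, zero_add] at ha hb
  exact ⟨Int.natCast_dvd_natCast.mp ha, Int.natCast_dvd_natCast.mp hb⟩

local notation "C" => Multiplicative (ZMod (p ^ (k - 1)))

noncomputable def zmodPowHom : C × C →* unitsOneModP ε p k hk :=
  (zmodPowersHom (oneAddMul_pow_eq_one p hk 1)).coprod
    (zmodPowersHom (oneAddMul_pow_eq_one p hk Zsqrtd.sqrtd))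

theorem zmodPowHom_ofAdd_natCast (a b : ℕ) :
    zmodPowHom p hk (.ofAdd (a : ZMod (p ^ (k - 1))), .ofAdd (b : ZMod (p ^ (k - 1)))) =
      oneAddMul p hk (1 : ℤ√ε) ^ a * oneAddMul p hk Zsqrtd.sqrtd ^ b := by
  simp only [zmodPowHom, MonoidHom.coprod_apply, zmodPowersHom_ofAdd_natCast]

theorem zmodPowHom_injective (hodd : Odd p) : Injective (zmodPowHom (ε := ε) p hk) := by
  refine MonoidHom.injective_of_pow_eq_one _ (p := p) (n := k - 1)
    (fun y => Prod.ext (Multiplicative.zmod_pow_eq_one _) (Multiplicative.zmod_pow_eq_one _))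
    fun w hwp hw => ?_
  rcases Nat.lt_or_ge k 2 with hk1 | hk2
  · have : Subsingleton (ZMod (p ^ (k - 1))) := by
      rw [show k - 1 = 0 by omega, pow_zero]; infer_instance
    exact Subsingleton.elim _ _
  have htors (c : C) (hc : c ^ p = 1) : ∃ a : ℕ, c = .ofAdd ((p ^ (k - 2) * a : ℕ) : ZMod _) :=
    ZMod.exists_eq_pow_pred_mul_of_nsmul_eq_zero hodd.pos (congrArg Multiplicative.toAdd hc)
  obtain ⟨a, ha⟩ := htors w.1 (by rw [← Prod.pow_fst, hwp]; rfl)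
  obtain ⟨b, hb⟩ := htors w.2 (by rw [← Prod.pow_snd, hwp]; rfl)
  have hw' :
      w = (.ofAdd ((p ^ (k - 2) * a : ℕ) : ZMod _), .ofAdd ((p ^ (k - 2) * b : ℕ) : ZMod _)) :=
    Prod.ext ha hb
  rw [hw', zmodPowHom_ofAdd_natCast, pow_mul', pow_mul', ← mul_pow] at hw
  obtain ⟨⟨a, rfl⟩, ⟨b, rfl⟩⟩ := dvd_of_oneAddMul_pow_mul_pow_eq_one p hk hodd hk2 hw
  have hzero (c : ℕ) : (.ofAdd ((p ^ (k - 2) * (p * c) : ℕ) : ZMod (p ^ (k - 1))) : C) = 1 := by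
    rw [← ofAdd_zero, EmbeddingLike.apply_eq_iff_eq, ZMod.natCast_eq_zero_iff, ← mul_assoc,
      ← pow_succ, show k - 2 + 1 = k - 1 by omega]
    exact Dvd.intro c rfl
  rw [hw', hzero, hzero, Prod.mk_one_one]

theorem oneAddMul_zmod_surjective (hp : 0 < p) :
    Surjective fun c : ZMod (p ^ (k - 1)) × ZMod (p ^ (k - 1)) =>
      oneAddMul (ε := ε) p hk ⟨c.1.val, c.2.val⟩ := by
  have : NeZero (p ^ (k - 1)) := ⟨(pow_pos hp _).ne'⟩
  intro b
  obtain ⟨z, rfl⟩ := oneAddMul_surjective p hk b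
  refine ⟨(z.re, z.im), oneAddMul_eq_oneAddMul p hk ?_⟩
  rw [Zsqrtd.natCast_pow_dvd_iff]
  simp only [ZMod.val_intCast, Zsqrtd.re_sub, Zsqrtd.im_sub]
  push_cast
  exact ⟨(Int.mod_modEq _ _).symm.dvd, (Int.mod_modEq _ _).symm.dvd⟩

theorem zmodPowHom_bijective (hodd : Odd p) : Bijective (zmodPowHom (ε := ε) p hk) := by
  have : NeZero (p ^ (k - 1)) := ⟨(pow_pos hodd.pos _).ne'⟩
  have hsurj := oneAddMul_zmod_surjective (ε := ε) p hk hodd.pos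
  have : Finite (unitsOneModP ε p k hk) := Finite.of_surjective _ hsurj
  have hinj := zmodPowHom_injective (ε := ε) p hk hodd
  refine (Nat.bijective_iff_injective_and_card _).mpr
    ⟨hinj, le_antisymm (Nat.card_le_card_of_injective _ hinj) ?_⟩
  calc Nat.card (unitsOneModP ε p k hk)
      ≤ Nat.card (ZMod (p ^ (k - 1)) × ZMod (p ^ (k - 1))) :=
        Nat.card_le_card_of_surjective _ hsurj
    _ = Nat.card (C × C) := Nat.card_congr (Multiplicative.ofAdd.prodCongr Multiplicative.ofAdd)

noncomputable def mulEquiv (hodd : Odd p) : unitsOneModP ε p k hk ≃* C × C :=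
  (MulEquiv.ofBijective _ (zmodPowHom_bijective p hk hodd)).symm

end UnitsOneModP

theorem unitsOneModP_structure_general (p k : ℕ) (hp : p.Prime) (hodd : Odd p) (hk : 1 ≤ k)
    (ε : ℤ) :
    Nonempty ((unitsOneModP ε p k hk) ≃*
        Multiplicative (ZMod (p ^ (k - 1))) × Multiplicative (ZMod (p ^ (k - 1)))) ∧
    Nat.card (unitsOneModP ε p k hk) = p ^ (2 * k - 2) ∧
    (2 ≤ k →
      Nat.card {x : unitsOneModP ε p k hk | orderOf x = p ^ (k - 1)}
        = p ^ (2 * k - 2) - p ^ (2 * k - 4)) := by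
  have : Fact p.Prime := ⟨hp⟩
  let e := UnitsOneModP.mulEquiv (ε := ε) p hk hodd
  refine ⟨⟨e⟩, ?_, fun hk2 => ?_⟩
  · rw [Nat.card_congr e.toEquiv,
      ← Nat.card_congr (Multiplicative.ofAdd.prodCongr Multiplicative.ofAdd), Nat.card_prod,
      Nat.card_zmod, ← pow_add]
    congr 1
    omega
  · obtain ⟨m, rfl⟩ : ∃ m, k = m + 2 := ⟨k - 2, by omega⟩
    rw [e.card_setOf_orderOf_eq, show 2 * (m + 2) - 2 = 2 * m + 2 by omega,
      show 2 * (m + 2) - 4 = 2 * m by omega]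
    exact card_setOf_orderOf_eq_prod_zmod m

/-- `B` is isomorphic to `ℤ/p^(k-1)ℤ × ℤ/p^(k-1)ℤ`; in particular it has order `p^(2k-2)`,
and for `k ≥ 2` it has exactly `p^(2k-2) - p^(2k-4)` elements of order `p^(k-1)`. -/
theorem unitsOneModP_structure (p k : ℕ) (hp : p.Prime) (hodd : Odd p) (hk : 1 ≤ k)
    (ε : ℤ) (hε : ¬ IsSquare (ε : ZMod p)) :
    Nonempty ((unitsOneModP ε p k hk) ≃*
        Multiplicative (ZMod (p ^ (k - 1))) × Multiplicative (ZMod (p ^ (k - 1)))) ∧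
    Nat.card (unitsOneModP ε p k hk) = p ^ (2 * k - 2) ∧
    (2 ≤ k →
      Nat.card {x : unitsOneModP ε p k hk | orderOf x = p ^ (k - 1)}
        = p ^ (2 * k - 2) - p ^ (2 * k - 4)) :=
  unitsOneModP_structure_general p k hp hodd hk ε
end

section
/- Let p be an odd prime, k ≥ 1, and let x ∈ ℤ[√ε] and 0 ≤ h ≤ k−1 be such that x ∈ p^hℤ[√ε] but x ∉ p^{h+1}ℤ[√ε]. Then the image of 1 + px in the unit group of O_k = ℤ[√ε]/p^kℤ[√ε] has multiplicative order exactly p^{k−1−h}. -/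
private lemma binom_cube {R : Type*} [CommRing R] (c : R) (n : ℕ) :
    ∃ w : R, (1 + c) ^ n = 1 + n * c + (n.choose 2) * c ^ 2 + c ^ 3 * w := by
  induction n with
  | zero => exact ⟨0, by simp⟩
  | succ n ih =>
    obtain ⟨w, hw⟩ := ih
    refine ⟨w + (n.choose 2 : R) + c * w, ?_⟩
    have h2 : ((n+1).choose 2 : R) = n.choose 2 + n := by
      rw [Nat.choose_succ_succ]
      push_cast [Nat.choose_one_right]
      ring
    rw [pow_succ, hw, h2]
    push_cast
    ring

private lemma step_lemma {R : Type*} [CommRing R] (p : ℕ) (hp : p.Prime) (hodd : Odd p)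
    (s : ℕ) (t : R) :
    ∃ u : R, (1 + (p : R) ^ (s + 1) * t) ^ p = 1 + (p : R) ^ (s + 2) * (t + p * u) := by
  obtain ⟨d, hd⟩ : p ∣ p.choose 2 := by
    refine hp.dvd_choose_self (by norm_num) ?_
    have := hp.two_le
    rcases hodd with ⟨m, hm⟩
    omega
  obtain ⟨w, hw⟩ := binom_cube ((p : R) ^ (s + 1) * t) p
  refine ⟨(p:R) ^ s * d * t ^ 2 + (p:R) ^ (2 * s) * t ^ 3 * w, ?_⟩
  rw [hw, hd]
  push_cast
  ring

private lemma iter_lemma {R : Type*} [CommRing R] (p : ℕ) (hp : p.Prime) (hodd : Odd p)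
    (m : ℕ) (s : ℕ) (t : R) :
    ∃ u : R, (1 + (p : R) ^ (s + 1) * t) ^ (p ^ m) = 1 + (p : R) ^ (s + 1 + m) * (t + p * u) := by
  induction m with
  | zero => exact ⟨0, by simp⟩
  | succ m ih =>
    obtain ⟨u, hu⟩ := ih
    obtain ⟨u', hu'⟩ := step_lemma p hp hodd (s + m) (t + p * u)
    refine ⟨u + u', ?_⟩
    rw [pow_succ p m, pow_mul, hu]
    have : s + 1 + m = (s + m) + 1 := by omega
    rw [this, hu']
    have : s + m + 2 = s + 1 + (m + 1) := by omega
    rw [this]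
    push_cast
    ring

/-- Let `p` be an odd prime, `k ≥ 1`, and let `x ∈ ℤ[√ε]` and `0 ≤ h ≤ k-1` be such that
`x ∈ p^h ℤ[√ε]` but `x ∉ p^(h+1) ℤ[√ε]`. Then the image of `1 + px` in (the unit group of)
`O_k = ℤ[√ε]/p^kℤ[√ε]` has multiplicative order exactly `p^(k-1-h)`. -/
theorem orderOf_one_add_p_mul (p k : ℕ) (hp : p.Prime) (hodd : Odd p) (hk : 1 ≤ k)
    (ε : ℤ) (hε : ¬ IsSquare (ε : ZMod p)) (x : Zsqrtd ε) (h : ℕ) (hh : h ≤ k - 1)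
    (hx1 : x ∈ Ideal.span {(p : Zsqrtd ε) ^ h})
    (hx2 : x ∉ Ideal.span {(p : Zsqrtd ε) ^ (h + 1)}) :
    orderOf (Ideal.Quotient.mk (Ideal.span {(p : Zsqrtd ε) ^ k}) (1 + (p : Zsqrtd ε) * x))
      = p ^ (k - 1 - h) := by
  set I : Ideal (Zsqrtd ε) := Ideal.span {(p : Zsqrtd ε) ^ k} with hI
  set π := Ideal.Quotient.mk I with hπ
  obtain ⟨y, hy⟩ : (p : Zsqrtd ε) ^ h ∣ x := Ideal.mem_span_singleton.mp hx1
  have hpy : ¬ (p : Zsqrtd ε) ∣ y := by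
    rintro ⟨z, hz⟩
    exact hx2 (Ideal.mem_span_singleton.mpr ⟨z, by rw [hy, hz]; ring⟩)
  have hux : 1 + (p : Zsqrtd ε) * x = 1 + (p : Zsqrtd ε) ^ (h + 1) * y := by rw [hy]; ring
  set m := k - 1 - h with hm
  have hkm : h + 1 + m = k := by omega
  -- upper bound: (1+px)^{p^m} = 1 in quotient
  obtain ⟨u, hu⟩ := iter_lemma p hp hodd m h y
  have hpow1 : π (1 + (p : Zsqrtd ε) * x) ^ (p ^ m) = 1 := by
    rw [← map_pow, hux, hu, hkm]
    have : ((1 : Zsqrtd ε) + (p:Zsqrtd ε) ^ k * (y + p * u)) - 1 ∈ I := by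
      refine Ideal.mem_span_singleton.mpr ⟨y + p * u, by ring⟩
    calc π (1 + (p:Zsqrtd ε)^k * (y + p*u)) = π 1 := Ideal.Quotient.eq.mpr this
    _ = 1 := map_one π
  have hdvd : orderOf (π (1 + (p : Zsqrtd ε) * x)) ∣ p ^ m := orderOf_dvd_of_pow_eq_one hpow1
  obtain ⟨j, hj, hoj⟩ := (Nat.dvd_prime_pow hp).mp hdvd
  rw [hoj]
  congr 1
  by_contra hne
  have hjm : j ≤ m - 1 := by omega
  have hm1 : 1 ≤ m := by omega
  have hdvd' : orderOf (π (1 + (p : Zsqrtd ε) * x)) ∣ p ^ (m - 1) :=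
    hoj ▸ pow_dvd_pow p hjm
  have hpow2 : π (1 + (p : Zsqrtd ε) * x) ^ (p ^ (m - 1)) = 1 :=
    orderOf_dvd_iff_pow_eq_one.mp hdvd'
  obtain ⟨u', hu'⟩ := iter_lemma p hp hodd (m - 1) h y
  have hk1 : h + 1 + (m - 1) = k - 1 := by omega
  rw [← map_pow, hux, hu', hk1] at hpow2
  have hmem : ((1 : Zsqrtd ε) + (p:Zsqrtd ε) ^ (k-1) * (y + p * u')) - 1 ∈ I := by
    rw [← map_one π] at hpow2
    exact Ideal.Quotient.eq.mp hpow2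
  obtain ⟨w, hw⟩ := Ideal.mem_span_singleton.mp hmem
  -- hw : 1 + p^(k-1)*(y+p u') - 1 = p^k * w
  apply hpy
  have hcancel : y + p * u' = (p : Zsqrtd ε) * w := by
    have hw' : ((p:ℤ)^(k-1) : Zsqrtd ε) * (y + p * u') = ((p:ℤ)^(k-1) : Zsqrtd ε) * ((p:Zsqrtd ε) * w) := by
      push_cast
      have hkk : (p : Zsqrtd ε) ^ k = (p:Zsqrtd ε)^(k-1) * p := by
        rw [← pow_succ]
        congr 1
        omega
      rw [hkk] at hw
      linear_combination hw
    rw [show ((p:ℤ):Zsqrtd ε) ^ (k-1) = (((p:ℤ)^(k-1) : ℤ) : Zsqrtd ε) by push_cast; ring] at hw'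
    exact Zsqrtd.eq_of_smul_eq_smul_left (pow_ne_zero _ (Int.natCast_ne_zero.mpr hp.ne_zero)) hw'
  exact ⟨w - u', by linear_combination hcancel⟩
end

section
/- Call a vector (x, y) ∈ (ℤ/p^kℤ)² primitive if x or y is a unit of ℤ/p^kℤ. The map sending a matrix M ∈ C_ns(p^k) to the column vector M·(1, 0)ᵀ is a bijection from C_ns(p^k) onto the set of primitive vectors of (ℤ/p^kℤ)²; in other words, C_ns(p^k) acts simply transitively on the primitive vectors. -/
/-!
The determinant of `[[a, b], [εb, a]]` is the norm form `a² - εb²`. Reducing modulo `p`, which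
detects units of `ℤ/p^kℤ`, this form vanishes only at `a = b = 0` because `ε` is not a square
mod `p`; so the matrix is invertible exactly when `(a, εb)` is primitive. Since `ε` is a unit,
the first column `(a, εb)` determines the matrix, and every primitive vector arises.
-/

theorem mul_self_sub_mul_mul_eq_zero_iff {K : Type*} [Field K] {ε : K} (hε : ¬IsSquare ε)
    (a b : K) : a * a - b * (ε * b) = 0 ↔ a = 0 ∧ b = 0 := by
  refine ⟨fun h => ?_, fun ⟨ha, hb⟩ => by simp [ha, hb]⟩
  rw [sub_eq_zero] at h
  have hb : b = 0 := by
    by_contra hb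
    refine hε ⟨a / b, ?_⟩
    field_simp
    linear_combination -h
  subst hb
  simpa using h

theorem isUnit_mul_self_sub_mul_mul_iff {R K : Type*} [CommRing R] [Field K] (f : R →+* K)
    [IsLocalHom f] {ε : R} (hε : ¬IsSquare (f ε)) (a b : R) :
    IsUnit (a * a - b * (ε * b)) ↔ IsUnit a ∨ IsUnit b := by
  simp only [← isUnit_map_iff f, isUnit_iff_ne_zero, map_sub, map_mul, ne_eq,
    mul_self_sub_mul_mul_eq_zero_iff hε, not_and_or]

theorem ZMod.isLocalHom_castHom_prime_pow {p k : ℕ} [Fact p.Prime] (hk : k ≠ 0) :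
    IsLocalHom (ZMod.castHom (dvd_pow_self p hk) (ZMod p)) where
  map_nonunit x hx := by
    have hval : ¬p ∣ x.val := by
      rw [← ZMod.natCast_eq_zero_iff, ZMod.natCast_val]
      exact isUnit_iff_ne_zero.mp hx
    rw [← ZMod.natCast_zmod_val x, ZMod.isUnit_iff_coprime,
      Nat.coprime_pow_right_iff (Nat.pos_of_ne_zero hk), Nat.coprime_comm,
      (Fact.out : p.Prime).coprime_iff_not_dvd]
    exact hval

theorem bijOn_firstColumn_cartan {R : Type*} [CommRing R] {ε : R}
    (hdet : ∀ a b : R, IsUnit (a * a - b * (ε * b)) ↔ IsUnit a ∨ IsUnit b) :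
    Set.BijOn (fun M : GL (Fin 2) R => ((M : Matrix (Fin 2) (Fin 2) R) 0 0,
        (M : Matrix (Fin 2) (Fin 2) R) 1 0))
      {M : GL (Fin 2) R | ∃ a b : R, (M : Matrix (Fin 2) (Fin 2) R) = !![a, b; ε * b, a]}
      {v : R × R | IsUnit v.1 ∨ IsUnit v.2} := by
  have hε : IsUnit ε := by simpa using (hdet 0 1).2 (Or.inr isUnit_one)
  refine ⟨?_, ?_, ?_⟩
  · rintro M ⟨a, b, hM⟩
    have hunit := (hdet a b).1 (by
      simpa [hM, Matrix.det_fin_two_of] using (Matrix.isUnit_iff_isUnit_det _).1 M.isUnit)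
    simpa [hM, IsUnit.mul_iff, hε] using hunit
  · rintro M ⟨a, b, hM⟩ M' ⟨a', b', hM'⟩ h
    have ha : a = a' := by simpa [hM, hM'] using congrArg Prod.fst h
    have hb : ε * b = ε * b' := by simpa [hM, hM'] using congrArg Prod.snd h
    exact Units.ext (by rw [hM, hM', ha, hε.mul_left_cancel hb])
  · rintro ⟨x, y⟩ hv
    set b := ↑hε.unit⁻¹ * y with hb
    have hεb : ε * b = y := by rw [hb, ← mul_assoc, hε.mul_val_inv, one_mul]
    have hA : IsUnit !![x, b; ε * b, x] := by
      rw [Matrix.isUnit_iff_isUnit_det, Matrix.det_fin_two_of, hdet]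
      simpa [hb] using hv
    exact ⟨hA.unit, ⟨x, b, hA.unit_spec⟩, by simp [hεb]⟩

theorem cartan_bijOn_primitive_general (p k : ℕ) (hp : p.Prime) (hk : 1 ≤ k)
    (ε : ℤ) (hε : ¬ IsSquare (ε : ZMod p)) :
    Set.BijOn
      (fun M : GL (Fin 2) (ZMod (p ^ k)) =>
        ((M : Matrix (Fin 2) (Fin 2) (ZMod (p ^ k))) 0 0,
         (M : Matrix (Fin 2) (Fin 2) (ZMod (p ^ k))) 1 0))
      {M : GL (Fin 2) (ZMod (p ^ k)) | ∃ a b : ZMod (p ^ k),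
        (M : Matrix (Fin 2) (Fin 2) (ZMod (p ^ k))) = !![a, b; (ε : ZMod (p ^ k)) * b, a]}
      {v : ZMod (p ^ k) × ZMod (p ^ k) | IsUnit v.1 ∨ IsUnit v.2} := by
  have : Fact p.Prime := ⟨hp⟩
  have hk0 : k ≠ 0 := Nat.one_le_iff_ne_zero.mp hk
  have := ZMod.isLocalHom_castHom_prime_pow (p := p) hk0
  refine bijOn_firstColumn_cartan
    (isUnit_mul_self_sub_mul_mul_iff (ZMod.castHom (dvd_pow_self p hk0) (ZMod p)) ?_)
  simpa using hε

/-- The non-split Cartan subgroup `C_ns(p^k)` acts simply transitively on the primitive vectors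
of `(ℤ/p^kℤ)²`: the map sending `M` to its first column `M·(1,0)ᵀ` is a bijection from the set
of matrices in `GL₂(ℤ/p^kℤ)` of the form `[[a, b], [εb, a]]` onto the set of vectors `(x, y)`
with `x` or `y` a unit. -/
theorem cartan_bijOn_primitive (p k : ℕ) (hp : p.Prime) (hodd : Odd p) (hk : 1 ≤ k)
    (ε : ℤ) (hε : ¬ IsSquare (ε : ZMod p)) :
    Set.BijOn
      (fun M : GL (Fin 2) (ZMod (p ^ k)) =>
        ((M : Matrix (Fin 2) (Fin 2) (ZMod (p ^ k))) 0 0,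
         (M : Matrix (Fin 2) (Fin 2) (ZMod (p ^ k))) 1 0))
      {M : GL (Fin 2) (ZMod (p ^ k)) | ∃ a b : ZMod (p ^ k),
        (M : Matrix (Fin 2) (Fin 2) (ZMod (p ^ k))) = !![a, b; (ε : ZMod (p ^ k)) * b, a]}
      {v : ZMod (p ^ k) × ZMod (p ^ k) | IsUnit v.1 ∨ IsUnit v.2} :=
  cartan_bijOn_primitive_general p k hp hk ε hε
end

section
/- Let G_∞(p^k) denote the subgroup of GL₂(ℤ/p^kℤ) of matrices of the form [[1, b], [0, d]] with b ∈ ℤ/p^kℤ and d a unit of ℤ/p^kℤ. Every element A of GL₂(ℤ/p^kℤ) admits a unique factorization A = M·g with M ∈ C_ns(p^k) and g ∈ G_∞(p^k). -/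
open Matrix

private lemma zmod_unit_iff (p k : ℕ) (hp : p.Prime) (hk : 1 ≤ k) (x : ZMod (p ^ k)) :
    IsUnit x ↔ (ZMod.castHom (dvd_pow_self p (by omega : k ≠ 0)) (ZMod p)) x ≠ 0 := by
  haveI : NeZero (p ^ k) := ⟨pow_ne_zero _ hp.pos.ne'⟩
  rw [ZMod.castHom_apply, ← ZMod.natCast_val, Ne, ZMod.natCast_eq_zero_iff,
    ← ZMod.natCast_zmod_val x, ZMod.isUnit_iff_coprime,
    Nat.coprime_pow_right_iff (by omega), Nat.coprime_comm, hp.coprime_iff_not_dvd]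
  rw [ZMod.natCast_zmod_val x]

/-- Every `A ∈ GL₂(ℤ/p^kℤ)` factors uniquely as `A = M·g` with `M` in the non-split Cartan
subgroup `C_ns(p^k)` (matrices `[[a, b], [εb, a]]`) and `g ∈ G_∞(p^k)` (invertible matrices
`[[1, b], [0, d]]`, so that `d` is a unit). -/
theorem cartan_factorization (p k : ℕ) (hp : p.Prime) (hodd : Odd p) (hk : 1 ≤ k)
    (ε : ℤ) (hε : ¬ IsSquare (ε : ZMod p)) (A : GL (Fin 2) (ZMod (p ^ k))) :
    ∃! Mg : GL (Fin 2) (ZMod (p ^ k)) × GL (Fin 2) (ZMod (p ^ k)),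
      (∃ a b : ZMod (p ^ k),
        (Mg.1 : Matrix (Fin 2) (Fin 2) (ZMod (p ^ k))) = !![a, b; (ε : ZMod (p ^ k)) * b, a]) ∧
      (∃ b d : ZMod (p ^ k),
        (Mg.2 : Matrix (Fin 2) (Fin 2) (ZMod (p ^ k))) = !![1, b; 0, d]) ∧
      A = Mg.1 * Mg.2 := by
  haveI : Fact p.Prime := ⟨hp⟩
  set R := ZMod (p ^ k)
  set f : R →+* ZMod p := ZMod.castHom (dvd_pow_self p (by omega : k ≠ 0)) (ZMod p) with hfdef
  have hunit : ∀ x : R, IsUnit x ↔ f x ≠ 0 := zmod_unit_iff p k hp hk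
  set ε' : R := (ε : R) with hε'def
  have hfε : f ε' = (ε : ZMod p) := map_intCast f ε
  have hεp : (ε : ZMod p) ≠ 0 := fun h => hε (h ▸ ⟨0, (mul_zero 0).symm⟩)
  have hε'u : IsUnit ε' := (hunit ε').mpr (by rw [hfε]; exact hεp)
  set a : R := (A : Matrix (Fin 2) (Fin 2) R) 0 0 with hadef
  set b : R := (↑hε'u.unit⁻¹ : R) * (A : Matrix (Fin 2) (Fin 2) R) 1 0 with hbdef
  have hεb : ε' * b = (A : Matrix (Fin 2) (Fin 2) R) 1 0 := by
    rw [hbdef, ← mul_assoc]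
    nth_rewrite 1 [← hε'u.unit_spec]
    rw [Units.mul_inv, one_mul]
  set Δ : R := a * a - ε' * (b * b) with hΔdef
  have hΔu : IsUnit Δ := by
    rw [hunit]
    intro h0
    rw [hΔdef] at h0
    simp only [map_sub, _root_.map_mul, hfε, sub_eq_zero] at h0
    have h1 : f a * f a = (ε : ZMod p) * (f b * f b) := h0
    have hfb : f b = 0 := by
      by_contra hfb
      refine hε ⟨f a * (f b)⁻¹, ?_⟩
      field_simp
      linear_combination -h1
    have hfa : f a = 0 := by
      have h2 : f a * f a = 0 := by rw [h1, hfb]; ring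
      exact mul_self_eq_zero.mp h2
    have hdetu : IsUnit (A : Matrix (Fin 2) (Fin 2) R).det :=
      (Matrix.isUnit_iff_isUnit_det _).mp A.isUnit
    rw [hunit] at hdetu
    apply hdetu
    rw [Matrix.det_fin_two, map_sub, _root_.map_mul, _root_.map_mul, ← hadef, hfa, ← hεb,
      _root_.map_mul, hfb]
    ring
  set N : Matrix (Fin 2) (Fin 2) R := !![a, b; ε' * b, a] with hNdef
  have hNdet : IsUnit N.det := by
    rw [hNdef, Matrix.det_fin_two_of]
    convert hΔu using 1
    rw [hΔdef]; ring
  have hNu : IsUnit N := (Matrix.isUnit_iff_isUnit_det N).mpr hNdet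
  set M : GL (Fin 2) R := hNu.unit with hMdef
  have hMval : (M : Matrix (Fin 2) (Fin 2) R) = N := hNu.unit_spec
  set g : GL (Fin 2) R := M⁻¹ * A with hgdef
  have hMg : A = M * g := by rw [hgdef, ← mul_assoc, mul_inv_cancel, one_mul]
  set iΔ : R := Ring.inverse Δ with hiΔdef
  set c : R := iΔ * (a * ((A : Matrix (Fin 2) (Fin 2) R) 0 1)
      - b * ((A : Matrix (Fin 2) (Fin 2) R) 1 1)) with hcdef
  set d : R := iΔ * (a * ((A : Matrix (Fin 2) (Fin 2) R) 1 1)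
      - ε' * b * ((A : Matrix (Fin 2) (Fin 2) R) 0 1)) with hddef
  have e1 : a * c + b * d = (A : Matrix (Fin 2) (Fin 2) R) 0 1 := by
    have h3 : a * c + b * d = iΔ * (Δ * ((A : Matrix (Fin 2) (Fin 2) R) 0 1)) := by
      rw [hcdef, hddef, hΔdef]; ring
    rw [h3, hiΔdef, Ring.inverse_mul_cancel_left _ _ hΔu]
  have e2 : ε' * b * c + a * d = (A : Matrix (Fin 2) (Fin 2) R) 1 1 := by
    have h3 : ε' * b * c + a * d = iΔ * (Δ * ((A : Matrix (Fin 2) (Fin 2) R) 1 1)) := by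
      rw [hcdef, hddef, hΔdef]; ring
    rw [h3, hiΔdef, Ring.inverse_mul_cancel_left _ _ hΔu]
  have hprod : N * !![1, c; 0, d] = (A : Matrix (Fin 2) (Fin 2) R) := by
    rw [hNdef, Matrix.mul_fin_two]
    rw [Matrix.eta_fin_two ((A : Matrix (Fin 2) (Fin 2) R))]
    simp only [mul_one, mul_zero, add_zero, e1, e2]
    rw [hadef, hεb]
  have hgval : (g : Matrix (Fin 2) (Fin 2) R) = !![1, c; 0, d] := by
    have h2 : (M : Matrix (Fin 2) (Fin 2) R) * (g : Matrix (Fin 2) (Fin 2) R)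
        = (M : Matrix (Fin 2) (Fin 2) R) * !![1, c; 0, d] := by
      rw [← Units.val_mul, ← hMg, hMval, hprod]
    exact (Units.mul_right_inj M).mp h2
  refine ⟨(M, g), ⟨⟨a, b, hMval.trans hNdef⟩, ⟨c, d, hgval⟩, hMg⟩, ?_⟩
  rintro ⟨M', g'⟩ ⟨⟨a', b', hM'⟩, ⟨c', d', hg'⟩, hA⟩
  have hAval : (A : Matrix (Fin 2) (Fin 2) R)
      = (M' : Matrix (Fin 2) (Fin 2) R) * (g' : Matrix (Fin 2) (Fin 2) R) := by
    rw [hA]; rfl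
  rw [hM', hg', Matrix.mul_fin_two] at hAval
  have h00 : (A : Matrix (Fin 2) (Fin 2) R) 0 0 = a' := by
    have := congrFun (congrFun hAval 0) 0
    simpa using this
  have h10 : (A : Matrix (Fin 2) (Fin 2) R) 1 0 = ε' * b' := by
    have := congrFun (congrFun hAval 1) 0
    simpa using this
  have ha' : a' = a := by rw [hadef, h00]
  have hb' : b' = b := by
    rw [hbdef, h10, ← mul_assoc]
    nth_rewrite 2 [← hε'u.unit_spec]
    rw [Units.inv_mul, one_mul]
  have hM'M : M' = M := by
    apply Units.ext
    rw [hM', hMval, hNdef, ha', hb']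
  have hg'g : g' = g := by
    have : M * g' = M * g := by rw [← hM'M, ← hA, hMg, hM'M]
    exact mul_left_cancel this
  exact Prod.ext hM'M hg'g
end

section
/- For every unit c of ℤ/p^kℤ, one has the identity 2·Σ a² = (p+1)·p^{k−1}·c in ℤ/p^kℤ, where the sum runs over all pairs (a, b) ∈ (ℤ/p^kℤ)² satisfying a² − εb² = c. -/
/-!
Write `N(a, b) = a² - εb²`, `S` for the solutions of `N = c` and `A`, `B` for the sums of `a²`,
`b²` over `S`. Summing `N` over `S` gives `A - εB = #S • c`. Multiplication by an element
`x + y√ε` of norm one permutes `S`; comparing the sums of `a²` after multiplying by `x ± y√ε`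
gives `2εy²(A + εB) = 0`, and `y` can be chosen to be a unit, so `2A = #S • c`.

To count `S`: every unit of `ℤ/p^k` is a norm (solve modulo `p` by pigeonhole, then rescale by a
square root of a unit `≡ 1 mod p`, which exists because such a unit `u` satisfies
`u ^ p ^ k = 1` with `p ^ k` odd). Hence all fibres of `N` over units have the same size, and
their union, the pairs not both divisible by `p`, has `p^(2k) - p^(2k-2)` elements;
dividing by `φ(p^k)` gives `#S = (p + 1) p^(k-1)`.
-/

open Finset Polynomial

section CommRing

variable {R : Type*} [CommRing R] {ε : R}

/-- The witness is `(1 + √ε) / (1 - √ε)`. -/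
theorem exists_sq_sub_mul_sq_eq_one (h2 : IsUnit (2 : R)) (h1ε : IsUnit (1 - ε)) :
    ∃ x y : R, x ^ 2 - ε * y ^ 2 = 1 ∧ IsUnit y := by
  obtain ⟨u, hu⟩ := h1ε.exists_right_inv
  refine ⟨(1 + ε) * u, 2 * u, by linear_combination ((1 - ε) * u + 1) * hu, ?_⟩
  exact h2.mul (IsUnit.of_mul_eq_one_right _ hu)

variable [Fintype R] [DecidableEq R]

variable (ε) in
def normFiber (c : R) : Finset (R × R) := univ.filter fun v => v.1 ^ 2 - ε * v.2 ^ 2 = c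

@[simp]
theorem mem_normFiber {c : R} {v : R × R} : v ∈ normFiber ε c ↔ v.1 ^ 2 - ε * v.2 ^ 2 = c := by
  simp [normFiber]

theorem sum_normFiber_mul {M : Type*} [AddCommMonoid M] {x y d : R}
    (hxy : x ^ 2 - ε * y ^ 2 = d) (hd : IsUnit d) (c : R) (f : R × R → M) :
    ∑ v ∈ normFiber ε c, f (x * v.1 + ε * y * v.2, y * v.1 + x * v.2) =
      ∑ v ∈ normFiber ε (d * c), f v := by
  obtain ⟨e, hde⟩ := hd.exists_right_inv
  refine sum_nbij' (fun v => (x * v.1 + ε * y * v.2, y * v.1 + x * v.2))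
    (fun v => (e * (x * v.1 - ε * y * v.2), e * (x * v.2 - y * v.1))) ?_ ?_ ?_ ?_ fun _ _ => rfl
  · intro v hv
    rw [mem_normFiber] at *
    linear_combination (v.1 ^ 2 - ε * v.2 ^ 2) * hxy + d * hv
  · intro v hv
    rw [mem_normFiber] at *
    linear_combination e ^ 2 * (v.1 ^ 2 - ε * v.2 ^ 2) * hxy + e ^ 2 * d * hv +
      c * (e * d + 1) * hde
  · intro v _
    ext
    · linear_combination e * v.1 * hxy + v.1 * hde
    · linear_combination e * v.2 * hxy + v.2 * hde
  · intro v _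
    ext
    · linear_combination e * v.1 * hxy + v.1 * hde
    · linear_combination e * v.2 * hxy + v.2 * hde

theorem sum_fst_sq_add_mul_sum_snd_sq_eq_zero {x y : R} (hxy : x ^ 2 - ε * y ^ 2 = 1)
    (hy : IsUnit (2 * ε * y ^ 2)) (c : R) :
    ∑ v ∈ normFiber ε c, v.1 ^ 2 + ε * ∑ v ∈ normFiber ε c, v.2 ^ 2 = 0 := by
  have hxy' : x ^ 2 - ε * (-y) ^ 2 = 1 := by linear_combination hxy
  have hplus := sum_normFiber_mul hxy isUnit_one c fun v => v.1 ^ 2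
  have hminus := sum_normFiber_mul hxy' isUnit_one c fun v => v.1 ^ 2
  rw [one_mul] at hplus hminus
  have hsum : ∑ v ∈ normFiber ε c, ((x * v.1 + ε * y * v.2) ^ 2 + (x * v.1 + ε * -y * v.2) ^ 2) =
      2 * x ^ 2 * ∑ v ∈ normFiber ε c, v.1 ^ 2 +
        2 * ε ^ 2 * y ^ 2 * ∑ v ∈ normFiber ε c, v.2 ^ 2 := by
    simp only [mul_sum, ← sum_add_distrib]
    exact sum_congr rfl fun v _ => by ring
  rw [sum_add_distrib, hplus, hminus] at hsum
  refine hy.mul_right_eq_zero.1 ?_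
  linear_combination -hsum - 2 * (∑ v ∈ normFiber ε c, v.1 ^ 2) * hxy

theorem two_mul_sum_fst_sq (h2 : IsUnit (2 : R)) (hε : IsUnit ε) (h1ε : IsUnit (1 - ε)) (c : R) :
    2 * ∑ v ∈ normFiber ε c, v.1 ^ 2 = #(normFiber ε c) * c := by
  obtain ⟨x, y, hxy, hy⟩ := exists_sq_sub_mul_sq_eq_one h2 h1ε
  have hadd := sum_fst_sq_add_mul_sum_snd_sq_eq_zero hxy ((h2.mul hε).mul (hy.pow 2)) c
  have hsub : ∑ v ∈ normFiber ε c, v.1 ^ 2 - ε * ∑ v ∈ normFiber ε c, v.2 ^ 2 =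
      #(normFiber ε c) * c := by
    rw [mul_sum, ← sum_sub_distrib, sum_congr rfl fun v hv => mem_normFiber.1 hv, sum_const,
      nsmul_eq_mul]
  linear_combination hadd + hsub

theorem card_normFiber_eq_card_normFiber_one
    (hsurj : ∀ d : R, IsUnit d → ∃ x y : R, x ^ 2 - ε * y ^ 2 = d) {c : R} (hc : IsUnit c) :
    #(normFiber ε c) = #(normFiber ε 1) := by
  obtain ⟨x, y, hxy⟩ := hsurj c hc
  rw [card_eq_sum_ones, card_eq_sum_ones, ← mul_one c]
  exact (sum_normFiber_mul hxy hc 1 fun _ => 1).symm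

theorem card_filter_isUnit_sq_sub_mul_sq [DecidablePred (IsUnit : R → Prop)]
    (hsurj : ∀ d : R, IsUnit d → ∃ x y : R, x ^ 2 - ε * y ^ 2 = d) :
    #(univ.filter fun v : R × R => IsUnit (v.1 ^ 2 - ε * v.2 ^ 2)) =
      #(univ.filter (IsUnit : R → Prop)) * #(normFiber ε 1) := by
  rw [card_eq_sum_card_fiberwise (f := fun v => v.1 ^ 2 - ε * v.2 ^ 2)
    (t := univ.filter IsUnit) fun v hv => by simpa using hv]
  refine sum_const_nat fun c hc => ?_
  rw [← card_normFiber_eq_card_normFiber_one hsurj (mem_filter.1 hc).2, normFiber, filter_filter]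
  congr 1
  ext v
  simp only [mem_filter, mem_univ, true_and, and_iff_right_iff_imp]
  exact fun h => h ▸ (mem_filter.1 hc).2

end CommRing

theorem card_filter_isUnit (M : Type*) [Monoid M] [Fintype M] [DecidableEq M]
    [DecidablePred (IsUnit : M → Prop)] :
    #(univ.filter (IsUnit : M → Prop)) = Fintype.card Mˣ := by
  rw [← card_univ, ← card_map ⟨Units.val, Units.val_injective⟩]
  congr 1
  ext x
  simp [IsUnit]

theorem sq_sub_mul_sq_eq_zero_iff {F : Type*} [Field F] {ε : F} (hε : ¬IsSquare ε) {a b : F} :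
    a ^ 2 - ε * b ^ 2 = 0 ↔ a = 0 ∧ b = 0 := by
  refine ⟨fun h => ?_, by rintro ⟨rfl, rfl⟩; ring⟩
  have hb : b = 0 := by
    by_contra hb
    exact hε ⟨a / b, by field_simp; linear_combination -h⟩
  subst hb
  simpa using h

namespace ZMod

variable {p k : ℕ}

theorem isSquare_of_castHom_eq_one (hodd : Odd p) (hk : k ≠ 0) {u : ZMod (p ^ k)}
    (hu : castHom (dvd_pow_self p hk) (ZMod p) u = 1) : IsSquare u := by
  have hdvd : (p : ZMod (p ^ k)) ∣ u - 1 := by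
    obtain ⟨n, hn⟩ := intCast_surjective (u - 1)
    have hn0 : (n : ZMod p) = 0 := by
      rw [← map_intCast (castHom (dvd_pow_self p hk) (ZMod p)), hn, map_sub, hu, map_one, sub_self]
    obtain ⟨m, rfl⟩ := (intCast_zmod_eq_zero_iff_dvd n p).1 hn0
    exact ⟨m, by rw [← hn]; push_cast; ring⟩
  have hpow : u ^ p ^ k = 1 := by
    have hp0 : (p : ZMod (p ^ k)) ^ (k + 1) = 0 := by
      rw [pow_succ, ← Nat.cast_pow, natCast_self, zero_mul]
    simpa [hp0, sub_eq_zero] using dvd_sub_pow_of_dvd_sub hdvd k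
  obtain ⟨m, hm⟩ := hodd.pow (n := k)
  refine ⟨u ^ (m + 1), ?_⟩
  calc u = u ^ (p ^ k + 1) := by rw [pow_succ, hpow, one_mul]
    _ = u ^ (m + 1) * u ^ (m + 1) := by rw [← pow_add]; congr 1; omega

variable [Fact p.Prime]

theorem isUnit_iff_castHom_ne_zero (hk : k ≠ 0) (x : ZMod (p ^ k)) :
    IsUnit x ↔ castHom (dvd_pow_self p hk) (ZMod p) x ≠ 0 := by
  obtain ⟨n, rfl⟩ := natCast_zmod_surjective x
  rw [map_natCast, isUnit_natCast_iff_not_dvd_pow Fact.out (Nat.pos_of_ne_zero hk), Ne,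
    natCast_eq_zero_iff]

theorem exists_sq_sub_mul_sq_eq (hodd : Odd p) (hk : k ≠ 0) {ε : ℤ} (hε : (ε : ZMod p) ≠ 0)
    {d : ZMod (p ^ k)} (hd : IsUnit d) : ∃ x y : ZMod (p ^ k), x ^ 2 - ε * y ^ 2 = d := by
  set π := castHom (dvd_pow_self p hk) (ZMod p)
  obtain ⟨a, b, hab⟩ := FiniteField.exists_root_sum_quadratic (degree_X_pow_sub_C two_pos (π d))
    (degree_C_mul_X_pow 2 (neg_ne_zero.2 hε)) (by rw [ZMod.card]; exact Nat.odd_iff.1 hodd)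
  obtain ⟨x, rfl⟩ := castHom_surjective (dvd_pow_self p hk) a
  obtain ⟨y, rfl⟩ := castHom_surjective (dvd_pow_self p hk) b
  have hxy : π (x ^ 2 - ε * y ^ 2) = π d := by
    simp only [eval_sub, eval_pow, eval_X, eval_C, eval_mul] at hab
    rw [map_sub, map_mul, map_pow, map_pow, map_intCast]
    linear_combination hab
  obtain ⟨e, he⟩ := ((isUnit_iff_castHom_ne_zero hk _).2
    (hxy ▸ (isUnit_iff_castHom_ne_zero hk d).1 hd)).exists_right_inv
  obtain ⟨t, ht⟩ := isSquare_of_castHom_eq_one hodd hk (u := d * e) <| by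
    rw [map_mul, ← hxy, ← map_mul, he, map_one]
  exact ⟨t * x, t * y, by linear_combination -(x ^ 2 - ε * y ^ 2) * ht + d * he⟩

theorem isUnit_sq_sub_mul_sq_iff (hk : k ≠ 0) {ε : ℤ} (hε : ¬IsSquare (ε : ZMod p))
    (a b : ZMod (p ^ k)) : IsUnit (a ^ 2 - ε * b ^ 2) ↔ IsUnit a ∨ IsUnit b := by
  simp only [isUnit_iff_castHom_ne_zero hk, map_sub, map_mul, map_pow, map_intCast, Ne,
    sq_sub_mul_sq_eq_zero_iff hε, not_and_or]

open Classical in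
theorem card_filter_isUnit_prime_pow (hk : k ≠ 0) :
    #(univ.filter (IsUnit : ZMod (p ^ k) → Prop)) = p ^ (k - 1) * (p - 1) := by
  rw [card_filter_isUnit, card_units_eq_totient,
    Nat.totient_prime_pow Fact.out (Nat.pos_of_ne_zero hk)]

open Classical in
theorem card_filter_not_isUnit (hk : k ≠ 0) :
    #(univ.filter fun x : ZMod (p ^ k) => ¬IsUnit x) = p ^ (k - 1) := by
  have h := card_filter_add_card_filter_not (s := univ) (IsUnit : ZMod (p ^ k) → Prop)
  rw [card_filter_isUnit_prime_pow hk, card_univ, ZMod.card] at h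
  obtain ⟨j, rfl⟩ := Nat.exists_eq_add_one_of_ne_zero hk
  obtain ⟨r, rfl⟩ := Nat.exists_eq_add_one_of_ne_zero (Fact.out : p.Prime).ne_zero
  simp only [Nat.add_sub_cancel, pow_succ] at h ⊢
  linarith

open Classical in
theorem card_filter_not_isUnit_sq_sub_mul_sq (hk : k ≠ 0) {ε : ℤ} (hε : ¬IsSquare (ε : ZMod p)) :
    #(univ.filter fun v : ZMod (p ^ k) × ZMod (p ^ k) => ¬IsUnit (v.1 ^ 2 - ε * v.2 ^ 2)) =
      (p ^ (k - 1)) ^ 2 := by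
  rw [← card_filter_not_isUnit hk, sq, ← card_product, ← filter_product, univ_product_univ]
  congr 1
  ext v
  simp only [mem_filter, mem_univ, true_and]
  rw [isUnit_sq_sub_mul_sq_iff hk hε, not_or]

theorem card_normFiber (hodd : Odd p) (hk : k ≠ 0) {ε : ℤ} (hε : ¬IsSquare (ε : ZMod p))
    {c : ZMod (p ^ k)} (hc : IsUnit c) :
    #(normFiber (ε : ZMod (p ^ k)) c) = (p + 1) * p ^ (k - 1) := by
  classical
  have hsurj := fun d (hd : IsUnit d) =>
    exists_sq_sub_mul_sq_eq hodd hk (fun h => hε (h ▸ IsSquare.zero)) hd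
  have hunits := card_filter_isUnit_sq_sub_mul_sq (ε := (ε : ZMod (p ^ k))) hsurj
  have hall := card_filter_add_card_filter_not (s := univ)
    fun v : ZMod (p ^ k) × ZMod (p ^ k) => IsUnit (v.1 ^ 2 - ε * v.2 ^ 2)
  rw [hunits, card_filter_isUnit_prime_pow hk, card_filter_not_isUnit_sq_sub_mul_sq hk hε,
    card_univ, Fintype.card_prod, ZMod.card] at hall
  rw [card_normFiber_eq_card_normFiber_one hsurj hc]
  obtain ⟨j, rfl⟩ := Nat.exists_eq_add_one_of_ne_zero hk
  obtain ⟨r, rfl⟩ := Nat.exists_eq_add_one_of_ne_zero (Fact.out : p.Prime).ne_zero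
  have hr : 0 < r := Nat.succ_lt_succ_iff.1 (Fact.out : (r + 1).Prime).two_le
  simp only [Nat.add_sub_cancel, pow_succ] at hall ⊢
  refine Nat.eq_of_mul_eq_mul_left (Nat.mul_pos (pow_pos r.add_one_pos j) hr) ?_
  linear_combination hall

end ZMod

/-- For every unit `c` of `ℤ/p^kℤ`, one has `2·Σ a² = (p+1)·p^(k-1)·c` in `ℤ/p^kℤ`, where the
sum runs over all pairs `(a, b) ∈ (ℤ/p^kℤ)²` with `a² − εb² = c`. -/
theorem sum_sq_fst_eq (p k : ℕ) [hp : Fact p.Prime] (hodd : Odd p) (hk : 1 ≤ k)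
    (ε : ℤ) (hε : ¬ IsSquare (ε : ZMod p)) (c : (ZMod (p ^ k))ˣ) :
    2 * ∑ v ∈ Finset.univ.filter
        (fun v : ZMod (p ^ k) × ZMod (p ^ k) =>
          v.1 ^ 2 - (ε : ZMod (p ^ k)) * v.2 ^ 2 = (c : ZMod (p ^ k))), v.1 ^ 2
      = (((p + 1) * p ^ (k - 1) : ℕ) : ZMod (p ^ k)) * (c : ZMod (p ^ k)) := by
  have hk0 : k ≠ 0 := by omega
  have hunit (z : ℤ) (hz : (z : ZMod p) ≠ 0) : IsUnit (z : ZMod (p ^ k)) :=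
    (ZMod.isUnit_iff_castHom_ne_zero hk0 _).2 (by rwa [map_intCast])
  have hp2 : p ≠ 2 := by
    rintro rfl
    exact absurd hodd (by decide)
  have h2 : IsUnit (2 : ZMod (p ^ k)) := by
    exact_mod_cast hunit 2 <| by exact_mod_cast Ring.two_ne_zero (by rwa [ZMod.ringChar_zmod_n])
  have h1ε : IsUnit (1 - ε : ZMod (p ^ k)) := by
    exact_mod_cast hunit (1 - ε) <| by
      push_cast
      exact sub_ne_zero.2 fun h => hε (h ▸ IsSquare.one)
  rw [← ZMod.card_normFiber hodd hk0 hε c.isUnit]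
  exact two_mul_sum_fst_sq h2 (hunit ε fun h => hε (h ▸ IsSquare.zero)) h1ε c
end
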